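/- arXiv:1511.03817 — 3 statements merged into one kernel-verified Lean document; each statement's English description precedes it below -/
import Mathlib

section
/- Fix ρ > 0, a finite cover of [log λ, log Λ] by open intervals I_j = (a_j, b_j), 1 ≤ j ≤ J, each of length < ρ/3, set N = ⌈6ρ^{−1} log⌈2Λ⌉⌉, and choose an integer q so large that (q+1)N·e^{−qρ/2} < 1/(4J). If 𝔫(τ) ≥ e^ρ, then for arbitrarily large n there exist: a point z₀ = (x,s) ∈ T², a unit vector v₀ ∈ ℝ², an index 1 ≤ j ≤ J, a subset B ⊂ A^q with #B = 2(q+1)N, and for each β ∈ B a subset Σ(β) ⊂ A^n with #Σ(β) ≥ e^{ρn}·ℓ^{−q}/(2J), such that: for every β ∈ B and every α ∈ Σ(β) one has [α]_q = β, v₀ ∈ Df^n(x_α)K_R, and (E^n)′(x_α) ∈ [e^{a_j n}, e^{b_j n}]. -/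
noncomputable section

open Filter Set Topology MeasureTheory

/-- The circle `ℝ/ℤ`. -/
abbrev 𝕊 : Type := UnitAddCircle

/-- The canonical representative in `[0,1)` of a point of the circle. -/
def rep (x : 𝕊) : ℝ := (AddCircle.equivIco 1 0 x : ℝ)

/-- A `C^r` expanding map of the circle of degree `ℓ`, presented by a lift `ℝ → ℝ`,
together with the expansion constants `1 < λ ≤ Λ` bounding its derivative. -/
structure ExpMap (r : ℕ) (ℓ : ℕ) : Type where
  toFun : ℝ → ℝ
  contDiff : ContDiff ℝ r toFun
  degree : ∀ x : ℝ, toFun (x + 1) = toFun x + ℓ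
  lam : ℝ
  Lam : ℝ
  one_lt_lam : 1 < lam
  lam_le_Lam : lam ≤ Lam
  lam_le_deriv : ∀ x : ℝ, lam ≤ deriv toFun x
  deriv_le_Lam : ∀ x : ℝ, deriv toFun x ≤ Lam

/-- A real-valued `C^s` function on the circle, presented by a `1`-periodic lift. -/
structure CrFun (s : ℕ∞) : Type where
  toFun : ℝ → ℝ
  contDiff : ContDiff ℝ s toFun
  periodic : ∀ x : ℝ, toFun (x + 1) = toFun x

variable {r ℓ : ℕ}

/-- The induced map on the circle. -/
def ExpMap.map (E : ExpMap r ℓ) : 𝕊 → 𝕊 := fun x => ((E.toFun (rep x) : ℝ) : 𝕊)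

/-- `(E^n)'(x)`, the derivative of the `n`-th iterate at a circle point. -/
def ExpMap.derivn (E : ExpMap r ℓ) (n : ℕ) (x : 𝕊) : ℝ := deriv (E.toFun^[n]) (rep x)

/-- `‖τ'‖_∞`, the sup-norm of the derivative of `τ`. -/
def CrFun.dsup {s : ℕ∞} (τ : CrFun s) : ℝ :=
  sSup ((fun x => |deriv τ.toFun x|) '' Set.Icc (0:ℝ) 1)

/-- The skew product `f = f_{E,τ} : 𝕋² → 𝕋²`, `f(x,s) = (E x, s + τ x)`. -/
def skew (E : ExpMap r ℓ) {s : ℕ∞} (τ : CrFun s) : 𝕊 × 𝕊 → 𝕊 × 𝕊 :=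
  fun z => (E.map z.1, z.2 + ((τ.toFun (rep z.1) : ℝ) : 𝕊))

/-- The Jacobian matrix `Df(z)`, depending only on the base coordinate. -/
def Jac1 (E : ExpMap r ℓ) {s : ℕ∞} (τ : CrFun s) (x : 𝕊) : Matrix (Fin 2) (Fin 2) ℝ :=
  !![deriv E.toFun (rep x), 0; deriv τ.toFun (rep x), 1]

/-- The Jacobian matrix `Df^n(z)` of the `n`-th iterate. -/
def Jacn (E : ExpMap r ℓ) {s : ℕ∞} (τ : CrFun s) : ℕ → 𝕊 × 𝕊 → Matrix (Fin 2) (Fin 2) ℝ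
  | 0, _ => 1
  | n+1, z => Jacn E τ n (skew E τ z) * Jac1 E τ z.1

/-- `Df^n` as a function of the base point only. -/
def JacnB (E : ExpMap r ℓ) {s : ℕ∞} (τ : CrFun s) (n : ℕ) (x : 𝕊) : Matrix (Fin 2) (Fin 2) ℝ :=
  Jacn E τ n (x, (0 : 𝕊))

/-- The cone `K_R = {(ξ,η) : |η| ≤ ϑ_R |ξ|}` with `ϑ_R = R/(λ-1)`. -/
def ExpMap.cone (E : ExpMap r ℓ) (R : ℝ) : Set (Fin 2 → ℝ) :=
  {v | |v 1| ≤ R / (E.lam - 1) * |v 0|}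

/-- A unit vector of `ℝ²`. -/
def IsUnitVec (v : Fin 2 → ℝ) : Prop := v 0 ^ 2 + v 1 ^ 2 = 1

/-- `𝔫(τ,R;n) = sup_z sup_v #{ζ ∈ f^{-n}(z) : v ∈ Df^n(ζ) K_R}`. -/
def nQ (E : ExpMap r ℓ) {s : ℕ∞} (τ : CrFun s) (R : ℝ) (n : ℕ) : ℝ :=
  sSup {c : ℝ | ∃ (z : 𝕊 × 𝕊) (v : Fin 2 → ℝ), IsUnitVec v ∧
    c = ({ζ : 𝕊 × 𝕊 | (skew E τ)^[n] ζ = z ∧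
      v ∈ (Jacn E τ n ζ).mulVec '' E.cone R}.ncard : ℝ)}

/-- `𝔫(τ) = lim_n 𝔫(τ,R;n)^{1/n}` (computed with the choice `R = ‖τ'‖_∞ + 1`). -/
def nlim (E : ExpMap r ℓ) {s : ℕ∞} (τ : CrFun s) : ℝ :=
  limUnder atTop (fun n : ℕ => nQ E τ (τ.dsup + 1) n ^ ((n : ℝ)⁻¹))

/-- The `C^r` distance between two (lifts of) functions on the circle. -/
def crDist (r : ℕ) (f g : ℝ → ℝ) : ℝ :=
  sSup {c : ℝ | ∃ i ≤ r, ∃ x ∈ Set.Icc (0:ℝ) 1, c = |iteratedDeriv i f x - iteratedDeriv i g x|}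

/-- `x_α`: the preimage point of `x` coded by the word `α = (α_n, …, α_1)`,
given the system `g` of inverse branches of `E`; here `α i` is the letter `α_{i+1}`. -/
def codePt (g : Fin ℓ → 𝕊 → 𝕊) : {n : ℕ} → (Fin n → Fin ℓ) → 𝕊 → 𝕊
  | 0, _, x => x
  | n+1, α, x => g (α (Fin.last n)) (codePt g (fun i : Fin n => α i.castSucc) x)

/-- `[α]_p`, the truncation of a word to length `p`. -/
def trunc {ℓ n : ℕ} (α : Fin n → Fin ℓ) (p : ℕ) (h : p ≤ n) : Fin p → Fin ℓ :=
  fun i => α (Fin.castLE h i)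

/-- `S_n(x;α;ψ) = Σ_{k=1}^n ψ'(x_{[α]_k}) / (E^k)'(x_{[α]_k})`. -/
def Ssum (E : ExpMap r ℓ) (g : Fin ℓ → 𝕊 → 𝕊) (ψ : ℝ → ℝ) {n : ℕ}
    (α : Fin n → Fin ℓ) (x : 𝕊) : ℝ :=
  ∑ k : Fin n, deriv ψ (rep (codePt g (trunc α (k.1+1) k.isLt) x)) /
    E.derivn (k.1+1) (codePt g (trunc α (k.1+1) k.isLt) x)

/-- `S(x;ω) = Σ_{k=1}^∞ τ'(x_{[ω]_k}) / (E^k)'(x_{[ω]_k})` for an infinite word `ω`. -/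
def Sinf (E : ExpMap r ℓ) (g : Fin ℓ → 𝕊 → 𝕊) (ψ : ℝ → ℝ) (y : 𝕊) (ω : ℕ → Fin ℓ) : ℝ :=
  ∑' k : ℕ, deriv ψ (rep (codePt g (fun i : Fin (k+1) => ω i) y)) /
    E.derivn (k+1) (codePt g (fun i : Fin (k+1) => ω i) y)

/-- Faure's counting function `Ñ_{R̃}(n)`. -/
def Ntilde (E : ExpMap r ℓ) (g : Fin ℓ → 𝕊 → 𝕊) {s : ℕ∞} (τ : CrFun s) (Rt : ℝ) (n : ℕ) : ℝ :=
  sSup {c : ℝ | ∃ (y : 𝕊) (η : ℝ),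
    c = ({α : Fin n → Fin ℓ | ∃ ω : ℕ → Fin ℓ, (∀ i : Fin n, ω i = α i) ∧
      |η - Sinf E g τ.toFun y ω| ≤ Rt * (E.derivn n (codePt g α y))⁻¹}.ncard : ℝ)}

/-- `𝐧(τ,R;n)`. -/
def nnQ (E : ExpMap r ℓ) {s : ℕ∞} (τ : CrFun s) (R : ℝ) (n : ℕ) : ℝ :=
  sSup {c : ℝ | ∃ (z : 𝕊 × 𝕊) (v : Fin 2 → ℝ), IsUnitVec v ∧
    c = ∑ᶠ ζ ∈ {ζ : 𝕊 × 𝕊 | (skew E τ)^[n] ζ = z ∧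
        v ∈ (Jacn E τ n ζ).mulVec '' E.cone R}, ((Jacn E τ n ζ).det)⁻¹}

/-- `𝐧(τ) = limsup_n 𝐧(τ,R;n)^{1/n}` (with `R = ‖τ'‖_∞ + 1`). -/
def nnlim (E : ExpMap r ℓ) {s : ℕ∞} (τ : CrFun s) : ℝ :=
  limsup (fun n : ℕ => nnQ E τ (τ.dsup + 1) n ^ ((n : ℝ)⁻¹)) atTop

/-- `𝐦(τ,R;n)`. -/
def mmQ (E : ExpMap r ℓ) {s : ℕ∞} (τ : CrFun s) (R : ℝ) (n : ℕ) : ℝ :=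
  sSup {c : ℝ | ∃ (z w : 𝕊 × 𝕊), (skew E τ)^[n] w = z ∧
    c = ∑ᶠ ζ ∈ {ζ : 𝕊 × 𝕊 | (skew E τ)^[n] ζ = z ∧
        ((Jacn E τ n ζ).mulVec '' E.cone R) ∩ ((Jacn E τ n w).mulVec '' E.cone R) = {0}},
      ((Jacn E τ n ζ).det)⁻¹}

/-- `𝐦(τ) = limsup_n 𝐦(τ,R;n)^{1/n}` (with `R = ‖τ'‖_∞ + 1`). -/
def mmlim (E : ExpMap r ℓ) {s : ℕ∞} (τ : CrFun s) : ℝ :=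
  limsup (fun n : ℕ => mmQ E τ (τ.dsup + 1) n ^ ((n : ℝ)⁻¹)) atTop

/-- `χ = lim_n (min_x (E^n)'(x))^{-1/n}`. -/
def chi (E : ExpMap r ℓ) : ℝ :=
  limUnder atTop (fun n : ℕ => (sInf (Set.range (E.derivn n))) ^ (-((n : ℝ)⁻¹)))

/-- The Gram-determinant Jacobian `Jac(M) = √(det (M Mᵀ))` of a `p × m` matrix,
which equals the modulus of the Jacobian determinant of the restriction of the
associated linear map to the orthogonal complement of its kernel when the map is
surjective, and `0` otherwise. -/
def gramJac {p m : ℕ} (M : Matrix (Fin p) (Fin m) ℝ) : ℝ :=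
  Real.sqrt (M * M.transpose).det

/-- The Jacobian of a linear map between Euclidean spaces. -/
def linJac {d e : ℕ} (L : EuclideanSpace ℝ (Fin d) →ₗ[ℝ] EuclideanSpace ℝ (Fin e)) : ℝ :=
  gramJac (LinearMap.toMatrix (EuclideanSpace.basisFun (Fin d) ℝ).toBasis
    (EuclideanSpace.basisFun (Fin e) ℝ).toBasis L)

/-!
The preimages of `z` under `f^n` are indexed by the words `α ∈ A^n` through the coding, and
`Df^n(x_α)` is lower triangular with diagonal `((E^n)'(x_α), 1)`, so it is invertible and maps
`K_R` into itself. Splitting `Df^{m+n}` at time `n` therefore makes `𝔫(τ,R;·)` submultiplicative,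
and by Fekete's lemma (the growth rate does not depend on `R`) `𝔫(τ,R;n) ≥ e^{ρn}` for every `n`.
This lower bound forbids losing a factor `e^{qρ/2}` over every window of length `q`, so for
arbitrarily large `n` one has `𝔫(τ,R;n-q) e^{qρ/2} ≤ 𝔫(τ,R;n)`. At such an `n` take `(z₀, v₀)`
realising `𝔫(τ,R;n)`: a pigeonhole over the intervals `I_j` keeps `1/J` of the words, each prefix
`β ∈ A^q` carries at most `𝔫(τ,R;n-q)` of them, and the prefixes carrying fewer than
`e^{ρn} ℓ^{-q}/(2J)` words hold at most half of them. Hence more than `e^{qρ/2}/(2J) > 2(q+1)N`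
prefixes are heavy.
-/

open Real Finset

lemma Finset.cast_card_le_card_mul_of_maps_to {α β : Type*} [DecidableEq β] {s : Finset α}
    {t : Finset β} {f : α → β} (hf : ∀ a ∈ s, f a ∈ t) {c : ℝ}
    (hc : ∀ b ∈ t, (#{a ∈ s | f a = b} : ℝ) ≤ c) : (#s : ℝ) ≤ #t * c := by
  rw [card_eq_sum_card_fiberwise hf]
  push_cast
  exact (sum_le_sum hc).trans_eq (by rw [sum_const, nsmul_eq_mul])

lemma exists_heavy_fibers {ι κ : Type*} [Fintype κ] [DecidableEq κ]
    (s : Finset ι) (f : ι → κ) {θ K : ℝ} (hθ : 0 ≤ θ) (hK : 0 < K)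
    (hfib : ∀ k, (#{i ∈ s | f i = k} : ℝ) ≤ K) {M : ℕ}
    (hM : M * K < #s - Fintype.card κ * θ) :
    ∃ B : Finset κ, #B = M ∧ ∀ k ∈ B, θ ≤ #{i ∈ s | f i = k} := by
  classical
  have hs : (#s : ℝ) = ∑ k, (#{i ∈ s | f i = k} : ℝ) := by
    exact_mod_cast card_eq_sum_card_fiberwise fun i _ => mem_univ (f i)
  rw [hs, ← sum_filter_add_sum_filter_not univ (fun k => θ ≤ #{i ∈ s | f i = k})] at hM
  set H := univ.filter fun k => θ ≤ #{i ∈ s | f i = k}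
  have hheavy : ∑ k ∈ H, (#{i ∈ s | f i = k} : ℝ) ≤ #H * K := by
    simpa using sum_le_card_nsmul H _ K fun k _ => hfib k
  have hlight : ∑ k ∈ univ.filter (fun k => ¬ θ ≤ #{i ∈ s | f i = k}),
      (#{i ∈ s | f i = k} : ℝ) ≤ Fintype.card κ * θ := by
    refine (sum_le_card_nsmul _ _ θ fun k hk => (not_le.1 (mem_filter.1 hk).2).le).trans ?_
    rw [nsmul_eq_mul]
    gcongr
    exact_mod_cast card_filter_le _ _
  have hMH : M < #H := by
    by_contra! h
    nlinarith [(Nat.cast_le (α := ℝ)).2 h]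
  obtain ⟨B, hBH, hB⟩ := exists_subset_card_eq hMH.le
  exact ⟨B, hB, fun k hk => (mem_filter.1 (hBH hk)).2⟩

lemma Subadditive.lim_le_lim_of_le_add {u w : ℕ → ℝ} (hu : Subadditive u) (hw : Subadditive w)
    (hbu : BddBelow (Set.range fun n => u n / n)) (hbw : BddBelow (Set.range fun n => w n / n))
    {m : ℕ} {C : ℝ} (h : ∀ n, u (n + m) ≤ w n + C) : hu.lim ≤ hw.lim := by
  have hlim : Tendsto (fun n : ℕ => (w n / n + C / n) * (n / (n + m))) atTop
      (𝓝 ((hw.lim + 0) * 1)) :=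
    ((hw.tendsto_lim hbw).add (tendsto_const_div_atTop_nhds_zero_nat C)).mul
      (tendsto_natCast_div_add_atTop (m : ℝ))
  refine ge_of_tendsto (by simpa using hlim) ?_
  filter_upwards [eventually_ne_atTop 0] with n hn
  have hn' : (0 : ℝ) < n := by positivity
  calc hu.lim ≤ u (n + m) / ↑(n + m) := hu.lim_le_div hbu (by omega)
    _ ≤ (w n + C) / (n + m) := by push_cast; gcongr; exact h n
    _ = (w n / n + C / n) * (n / (n + m)) := by field_simp

lemma exists_le_mul_exp_half {u : ℕ → ℝ} {ρ : ℝ} (hρ : 0 < ρ) (hu : ∀ n : ℕ, exp (ρ * n) ≤ u n)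
    (q n₀ : ℕ) : ∃ n, n₀ ≤ n ∧ q < n ∧ u (n - q) * exp (q * ρ / 2) ≤ u n := by
  by_contra! h
  set m := max n₀ (q + 1)
  rcases q.eq_zero_or_pos with rfl | hq
  · simpa using h m (le_max_left _ _) (by omega)
  have hgrow (k : ℕ) : u (m + k * q) ≤ u m * exp (k * (q * ρ / 2)) := by
    induction k with
    | zero => simp
    | succ k ih =>
      have hk := h (m + (k + 1) * q) ((le_max_left _ _).trans (Nat.le_add_right _ _))
        (lt_of_lt_of_le (by omega) (Nat.le_add_right _ _))
      rw [show m + (k + 1) * q - q = m + k * q by rw [add_one_mul, ← add_assoc,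
        Nat.add_sub_cancel]] at hk
      calc u (m + (k + 1) * q) ≤ u (m + k * q) * exp (q * ρ / 2) := hk.le
        _ ≤ u m * exp (k * (q * ρ / 2)) * exp (q * ρ / 2) := by gcongr
        _ = u m * exp ((k + 1 : ℕ) * (q * ρ / 2)) := by
          rw [mul_assoc, ← exp_add]; push_cast; ring_nf
  have hqρ : 0 < q * ρ / 2 := by positivity
  obtain ⟨k, hk⟩ := exists_nat_gt (u m / (q * ρ / 2))
  have hsq : exp (k * (q * ρ / 2)) * exp (k * (q * ρ / 2)) ≤ u m * exp (k * (q * ρ / 2)) :=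
    calc _ = exp (ρ * (k * q)) := by rw [← exp_add]; ring_nf
      _ ≤ exp (ρ * ↑(m + k * q)) := by gcongr; push_cast; linarith [Nat.cast_nonneg (α := ℝ) m]
      _ ≤ _ := (hu _).trans (hgrow k)
  have hle := le_of_mul_le_mul_right hsq (exp_pos _)
  rw [div_lt_iff₀ hqρ] at hk
  linarith [add_one_le_exp (k * (q * ρ / 2))]

lemma mul_lt_sub_of_exp_growth {q N J : ℕ} {ρ Q Q' G D : ℝ} (hJ : 0 < J) (hQ' : 0 < Q')
    (hq : ((q + 1) * N : ℝ) * exp (-(q : ℝ) * ρ / 2) < 1 / (4 * J))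
    (hgrowth : Q' * exp (q * ρ / 2) ≤ Q) (hD : D ≤ Q) (hG : Q / J ≤ G) :
    (2 * (q + 1) * N : ℝ) * Q' < G - D / (2 * J) := by
  have hJ' : (0 : ℝ) < J := by exact_mod_cast hJ
  rw [neg_mul, neg_div, exp_neg, ← div_eq_mul_inv, div_lt_div_iff₀ (exp_pos _) (by positivity),
    one_mul] at hq
  calc (2 * (q + 1) * N : ℝ) * Q' = ((q + 1) * N * (4 * J)) * Q' / (2 * J) := by
        field_simp; ring
    _ < exp (q * ρ / 2) * Q' / (2 * J) := by gcongr
    _ ≤ Q / J - Q / (2 * J) := by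
        rw [mul_comm]; field_simp; linarith
    _ ≤ G - D / (2 * J) := by gcongr

lemma IsUnitVec.ne_zero {v : Fin 2 → ℝ} (hv : IsUnitVec v) : v ≠ 0 := by
  rintro rfl
  simp [IsUnitVec] at hv

lemma exists_isUnitVec_smul {u : Fin 2 → ℝ} (hu : u ≠ 0) : ∃ c : ℝ, IsUnitVec (c • u) := by
  have hS : 0 < u 0 ^ 2 + u 1 ^ 2 := by
    obtain ⟨i, hi⟩ := Function.ne_iff.1 hu
    fin_cases i
    · have := sq_pos_of_ne_zero hi; positivity
    · have := sq_pos_of_ne_zero hi; positivity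
  refine ⟨(√(u 0 ^ 2 + u 1 ^ 2))⁻¹, ?_⟩
  simp only [IsUnitVec, Pi.smul_apply, smul_eq_mul, mul_pow, ← mul_add, inv_pow,
    sq_sqrt hS.le]
  exact inv_mul_cancel₀ hS.ne'

lemma CrFun.abs_deriv_rep_le_dsup {s : ℕ∞} (τ : CrFun s) (hs : 1 ≤ s) (x : 𝕊) :
    |deriv τ.toFun (rep x)| ≤ τ.dsup := by
  refine le_csSup ?_ ⟨rep x, ?_, rfl⟩
  · exact isCompact_Icc.bddAbove_image
      ((τ.contDiff.continuous_deriv (by exact_mod_cast hs)).abs).continuousOn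
  · simpa [rep] using Ico_subset_Icc_self (AddCircle.equivIco 1 0 x).2

lemma CrFun.dsup_nonneg {s : ℕ∞} (τ : CrFun s) (hs : 1 ≤ s) : 0 ≤ τ.dsup :=
  (abs_nonneg _).trans (τ.abs_deriv_rep_le_dsup hs 0)

lemma ExpMap.deriv_iterate_mem_Icc (E : ExpMap r ℓ) (hr : 1 ≤ r) (n : ℕ) (y : ℝ) :
    deriv (E.toFun^[n]) y ∈ Icc (E.lam ^ n) (E.Lam ^ n) := by
  have hE : Differentiable ℝ E.toFun :=
    E.contDiff.differentiable (by exact_mod_cast (by omega : r ≠ 0))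
  induction n generalizing y with
  | zero => simp
  | succ n ih =>
    have hlam : 0 < E.lam := one_pos.trans E.one_lt_lam
    have h1 := E.lam_le_deriv (E.toFun^[n] y)
    have h2 := E.deriv_le_Lam (E.toFun^[n] y)
    obtain ⟨h3, h4⟩ := ih y
    rw [Function.iterate_succ', deriv_comp y (hE _) ((hE.iterate n) y), pow_succ', pow_succ']
    exact ⟨mul_le_mul h1 h3 (by positivity) (by linarith),
      mul_le_mul h2 h4 (by linarith [pow_pos hlam n]) (by linarith)⟩

lemma ExpMap.exists_derivn_mem_Icc_exp (E : ExpMap r ℓ) (hr : 1 ≤ r) {J : ℕ} {a b : Fin J → ℝ}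
    (hcover : Icc (log E.lam) (log E.Lam) ⊆ ⋃ j, Ioo (a j) (b j)) {n : ℕ} (hn : 0 < n)
    (y : 𝕊) : ∃ j, E.derivn n y ∈ Icc (exp (a j * n)) (exp (b j * n)) := by
  have hlam : 0 < E.lam := one_pos.trans E.one_lt_lam
  obtain ⟨hlo, hhi⟩ := E.deriv_iterate_mem_Icc hr n (rep y)
  have hd : 0 < E.derivn n y := (pow_pos hlam n).trans_le hlo
  have hn' : (0 : ℝ) < n := by exact_mod_cast hn
  have hmem : log (E.derivn n y) / n ∈ Icc (log E.lam) (log E.Lam) := by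
    rw [Set.mem_Icc, le_div_iff₀ hn', div_le_iff₀ hn', mul_comm, ← log_pow, mul_comm, ← log_pow]
    exact ⟨log_le_log (pow_pos hlam n) hlo, log_le_log hd hhi⟩
  obtain ⟨j, hj⟩ := mem_iUnion.1 (hcover hmem)
  rw [Set.mem_Ioo, lt_div_iff₀ hn', div_lt_iff₀ hn'] at hj
  exact ⟨j, ((exp_lt_exp.2 hj.1).trans_eq (exp_log hd)).le,
    ((exp_log hd).symm.trans_lt (exp_lt_exp.2 hj.2)).le⟩

lemma ExpMap.exists_le_card_filter_derivn_mem_Icc_exp (E : ExpMap r ℓ) (hr : 1 ≤ r) {J : ℕ}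
    {a b : Fin J → ℝ} (hcover : Icc (log E.lam) (log E.Lam) ⊆ ⋃ j, Ioo (a j) (b j)) (hJ : 0 < J)
    {n : ℕ} (hn : 0 < n) {ι : Type*} (T : Finset ι) (φ : ι → 𝕊) :
    ∃ j, (#T : ℝ) / J ≤ #{i ∈ T | E.derivn n (φ i) ∈ Icc (exp (a j * n)) (exp (b j * n))} := by
  classical
  choose c hc using fun i => E.exists_derivn_mem_Icc_exp hr hcover hn (φ i)
  have : Nonempty (Fin J) := ⟨⟨0, hJ⟩⟩
  have hT : #(univ : Finset (Fin J)) • ((#T : ℝ) / J) ≤ #T := by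
    have hJ' : (J : ℝ) ≠ 0 := by positivity
    simp [nsmul_eq_mul, mul_div_cancel₀, hJ']
  obtain ⟨j, -, hj⟩ := exists_le_card_fiber_of_nsmul_le_card_of_maps_to (s := T) (f := c)
    (fun i _ => mem_univ (c i)) univ_nonempty hT
  refine ⟨j, hj.trans (Nat.cast_le.2 (card_le_card fun i hi => ?_))⟩
  obtain ⟨hiT, rfl⟩ := mem_filter.1 hi
  exact mem_filter.2 ⟨hiT, hc i⟩

lemma smul_mem_image_mulVec_cone {E : ExpMap r ℓ} {R : ℝ} {M : Matrix (Fin 2) (Fin 2) ℝ}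
    {v : Fin 2 → ℝ} (c : ℝ) (hv : v ∈ M.mulVec '' E.cone R) : c • v ∈ M.mulVec '' E.cone R := by
  obtain ⟨w, hw, rfl⟩ := hv
  refine ⟨c • w, ?_, Matrix.mulVec_smul M c w⟩
  show |c * w 1| ≤ R / (E.lam - 1) * |c * w 0|
  rw [abs_mul, abs_mul, mul_left_comm]
  exact mul_le_mul_of_nonneg_left hw (abs_nonneg c)

section Jacobian

variable {E : ExpMap r ℓ} {s : ℕ∞} {τ : CrFun s}

lemma Jacn_eq_JacnB (n : ℕ) (z : 𝕊 × 𝕊) : Jacn E τ n z = JacnB E τ n z.1 := by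
  induction n generalizing z with
  | zero => rfl
  | succ n ih =>
    show Jacn E τ n (skew E τ z) * _ = Jacn E τ n (skew E τ (z.1, 0)) * _
    rw [ih, ih (skew E τ (z.1, 0))]
    rfl

lemma JacnB_succ (n : ℕ) (x : 𝕊) :
    JacnB E τ (n + 1) x = JacnB E τ n (E.map x) * Jac1 E τ x := by
  show Jacn E τ n (skew E τ (x, 0)) * _ = _
  rw [Jacn_eq_JacnB]
  rfl

lemma JacnB_add (m n : ℕ) (x : 𝕊) :
    JacnB E τ (m + n) x = JacnB E τ m (E.map^[n] x) * JacnB E τ n x := by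
  induction n generalizing x with
  | zero => simp [JacnB, Jacn]
  | succ n ih =>
    rw [← add_assoc, JacnB_succ, ih, JacnB_succ, Matrix.mul_assoc, Function.iterate_succ_apply]

lemma JacnB_sub {L p : ℕ} (hpL : p ≤ L) (x : 𝕊) :
    JacnB E τ L x = JacnB E τ p (E.map^[L - p] x) * JacnB E τ (L - p) x := by
  rw [← JacnB_add, Nat.add_sub_cancel' hpL]

/-- `Q = ∑_{k<n} τ'(E^k x) (E^k)'(x)` with `(E^k)'(x) ≤ λ^{k-n} P`, hence the geometric-series
bound on `Q`. -/
lemma JacnB_eq_lowerTriangular (hs : 1 ≤ s) (n : ℕ) (x : 𝕊) :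
    ∃ P Q : ℝ, JacnB E τ n x = !![P, 0; Q, 1] ∧ E.lam ^ n ≤ P ∧
      |Q| * (E.lam - 1) ≤ τ.dsup * (P - 1) := by
  induction n generalizing x with
  | zero => exact ⟨1, 0, by ext i j; fin_cases i <;> fin_cases j <;> rfl, by simp, by simp⟩
  | succ n ih =>
    obtain ⟨P, Q, hJ, hP, hQ⟩ := ih (E.map x)
    set e := deriv E.toFun (rep x)
    set t := deriv τ.toFun (rep x)
    have he : E.lam ≤ e := E.lam_le_deriv _
    have ht : |t| ≤ τ.dsup := τ.abs_deriv_rep_le_dsup hs x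
    have hlam := E.one_lt_lam
    have hP1 : 1 ≤ P := (one_le_pow₀ hlam.le).trans hP
    refine ⟨P * e, Q * e + t, ?_, ?_, ?_⟩
    · rw [JacnB_succ, hJ, Jac1, Matrix.mul_fin_two]
      simp [e, t]
    · rw [pow_succ]
      exact mul_le_mul hP he (by linarith) (by linarith)
    · have hQe : |Q * e + t| ≤ |Q| * e + τ.dsup := by
        calc |Q * e + t| ≤ |Q * e| + |t| := abs_add_le _ _
          _ = |Q| * e + |t| := by rw [abs_mul, abs_of_pos (show 0 < e by linarith)]
          _ ≤ |Q| * e + τ.dsup := by linarith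
      have hd : 0 ≤ τ.dsup := τ.dsup_nonneg hs
      nlinarith [mul_le_mul_of_nonneg_right hQ (by linarith : (0:ℝ) ≤ e),
        mul_nonneg hd (by linarith : (0:ℝ) ≤ e - E.lam)]

lemma isUnit_det_JacnB (hs : 1 ≤ s) (n : ℕ) (x : 𝕊) : IsUnit (JacnB E τ n x).det := by
  obtain ⟨P, Q, hJ, hP, -⟩ := JacnB_eq_lowerTriangular (τ := τ) (E := E) hs n x
  rw [hJ, Matrix.det_fin_two_of]
  exact (by linarith [pow_pos (one_pos.trans E.one_lt_lam) n] : P * 1 - 0 * Q ≠ 0).isUnit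

lemma lowerTriangular_mulVec_mem_cone {R R' P Q : ℝ} (hP : 0 ≤ P)
    (hPQ : |Q| * (E.lam - 1) + R' ≤ R * P) {w : Fin 2 → ℝ} (hw : w ∈ E.cone R') :
    (!![P, 0; Q, 1] : Matrix (Fin 2) (Fin 2) ℝ).mulVec w ∈ E.cone R := by
  have hd : 0 < E.lam - 1 := by linarith [E.one_lt_lam]
  have hw' : |w 1| * (E.lam - 1) ≤ R' * |w 0| := by
    have := mul_le_mul_of_nonneg_right (show |w 1| ≤ R' / (E.lam - 1) * |w 0| from hw) hd.le
    rwa [mul_right_comm, div_mul_cancel₀ _ hd.ne'] at this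
  show |_| ≤ R / (E.lam - 1) * |_|
  have h0 : (!![P, 0; Q, 1] : Matrix (Fin 2) (Fin 2) ℝ).mulVec w 0 = P * w 0 := by
    simp [Matrix.mulVec, dotProduct, Fin.sum_univ_two]
  have h1 : (!![P, 0; Q, 1] : Matrix (Fin 2) (Fin 2) ℝ).mulVec w 1 = Q * w 0 + w 1 := by
    simp [Matrix.mulVec, dotProduct, Fin.sum_univ_two]
  rw [h0, h1, abs_mul, abs_of_nonneg hP, ← mul_assoc, div_mul_eq_mul_div, div_mul_eq_mul_div,
    le_div_iff₀ hd]
  calc |Q * w 0 + w 1| * (E.lam - 1) ≤ (|Q| * |w 0| + |w 1|) * (E.lam - 1) := by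
        gcongr
        exact (abs_add_le _ _).trans_eq (by rw [abs_mul])
    _ ≤ R * P * |w 0| := by nlinarith [abs_nonneg (w 0)]

/-- With `R' = R` this is the invariance of `K_R`; for large `n` it squeezes a wider cone `K_{R'}`
into `K_R`. -/
lemma JacnB_mulVec_mem_cone (hs : 1 ≤ s) {R R' : ℝ} (hR : τ.dsup ≤ R) {n : ℕ}
    (hR' : R' ≤ R + (R - τ.dsup) * (E.lam ^ n - 1)) (x : 𝕊) {w : Fin 2 → ℝ}
    (hw : w ∈ E.cone R') : (JacnB E τ n x).mulVec w ∈ E.cone R := by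
  obtain ⟨P, Q, hJ, hP, hQ⟩ := JacnB_eq_lowerTriangular (τ := τ) (E := E) hs n x
  have hP0 : 0 ≤ P := (pow_nonneg (by linarith [E.one_lt_lam]) n).trans hP
  rw [hJ]
  refine lowerTriangular_mulVec_mem_cone hP0 ?_ hw
  nlinarith [mul_le_mul_of_nonneg_left hP (by linarith : (0:ℝ) ≤ R - τ.dsup)]

end Jacobian

/-- The inverse branches of the symbolic coding: `g j` is the inverse of `E` on `I(j)`. -/
structure IsInverseBranches (E : ExpMap r ℓ) (g : Fin ℓ → 𝕊 → 𝕊) : Prop where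
  map_apply : ∀ j y, E.map (g j y) = y
  existsUnique : ∀ z, ∃! p : Fin ℓ × 𝕊, g p.1 p.2 = z

namespace IsInverseBranches

variable {E : ExpMap r ℓ} {g : Fin ℓ → 𝕊 → 𝕊}

lemma pos (hg : IsInverseBranches E g) : 0 < ℓ := by
  obtain ⟨⟨j, _⟩, _⟩ := (hg.existsUnique 0).exists
  exact j.pos

lemma codePt_injective (hg : IsInverseBranches E g) {n : ℕ} (x : 𝕊) :
    Function.Injective fun α : Fin n → Fin ℓ => codePt g α x := by
  induction n with
  | zero => exact fun _ _ _ => funext (·.elim0)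
  | succ n ih =>
    intro α α' h
    have hp := (hg.existsUnique (codePt g α x)).unique (y₁ := (α (Fin.last n), _)) rfl
      (y₂ := (α' (Fin.last n), codePt g (fun i : Fin n => α' i.castSucc) x)) h.symm
    simp only [Prod.mk.injEq] at hp
    have hinit := ih hp.2
    exact funext (Fin.lastCases hp.1 fun i => congrFun hinit i)

lemma map_iterate_codePt (hg : IsInverseBranches E g) {n p : ℕ} (hpn : p ≤ n)
    (α : Fin n → Fin ℓ) (x : 𝕊) :
    E.map^[n - p] (codePt g α x) = codePt g (trunc α p hpn) x := by
  induction n generalizing p with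
  | zero =>
    obtain rfl : p = 0 := by omega
    rfl
  | succ n ih =>
    rcases hpn.eq_or_lt with rfl | hlt
    · simp only [Nat.sub_self, Function.iterate_zero, id]
      rfl
    · rw [Nat.succ_sub (by omega), Function.iterate_succ_apply]
      exact (congrArg _ (hg.map_apply _ _)).trans (ih (by omega) _)

lemma map_iterate_codePt_self (hg : IsInverseBranches E g) {n : ℕ} (α : Fin n → Fin ℓ)
    (x : 𝕊) : E.map^[n] (codePt g α x) = x :=
  hg.map_iterate_codePt (Nat.zero_le n) α x

lemma exists_codePt_eq (hg : IsInverseBranches E g) {n : ℕ} {x y : 𝕊}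
    (hy : E.map^[n] y = x) : ∃ α : Fin n → Fin ℓ, codePt g α x = y := by
  induction n generalizing y with
  | zero => exact ⟨Fin.elim0, hy.symm⟩
  | succ n ih =>
    obtain ⟨α, hα⟩ := ih ((Function.iterate_succ_apply _ _ _).symm.trans hy)
    obtain ⟨⟨j, w⟩, hjw, -⟩ := hg.existsUnique y
    have hw : w = E.map y := by rw [← hjw, hg.map_apply]
    refine ⟨Fin.snoc α j, ?_⟩
    simp only [codePt, Fin.snoc_last, Fin.snoc_castSucc]
    rw [hα, ← hw]
    exact hjw

lemma map_iterate_eq_iff (hg : IsInverseBranches E g) {n : ℕ} {x y : 𝕊} :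
    E.map^[n] y = x ↔ ∃ α : Fin n → Fin ℓ, codePt g α x = y := by
  refine ⟨hg.exists_codePt_eq, ?_⟩
  rintro ⟨α, rfl⟩
  exact hg.map_iterate_codePt_self α x

end IsInverseBranches

section SkewProduct

variable {E : ExpMap r ℓ} {s : ℕ∞} {τ : CrFun s}

lemma skew_iterate_fst (n : ℕ) (ζ : 𝕊 × 𝕊) : ((skew E τ)^[n] ζ).1 = E.map^[n] ζ.1 := by
  induction n generalizing ζ with
  | zero => rfl
  | succ n ih => exact ih (skew E τ ζ)

lemma eq_of_skew_iterate_eq_of_fst_eq {n : ℕ} {ζ₁ ζ₂ : 𝕊 × 𝕊}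
    (h : (skew E τ)^[n] ζ₁ = (skew E τ)^[n] ζ₂) (h1 : ζ₁.1 = ζ₂.1) : ζ₁ = ζ₂ := by
  induction n generalizing ζ₁ ζ₂ with
  | zero => exact h
  | succ n ih =>
    have hs := ih h (by simp only [skew, h1])
    simp only [skew, Prod.mk.injEq, h1, add_left_inj] at hs
    exact Prod.ext h1 hs.2

lemma exists_skew_iterate_eq {n : ℕ} {y : 𝕊} {z : 𝕊 × 𝕊} (hy : E.map^[n] y = z.1) :
    ∃ t : 𝕊, (skew E τ)^[n] (y, t) = z := by
  induction n generalizing y with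
  | zero => exact ⟨z.2, Prod.ext hy rfl⟩
  | succ n ih =>
    obtain ⟨t, ht⟩ := ih ((Function.iterate_succ_apply _ _ _).symm.trans hy)
    refine ⟨t - ((τ.toFun (rep y) : ℝ) : 𝕊), ?_⟩
    rw [Function.iterate_succ_apply, ← ht]
    simp [skew]

end SkewProduct

open scoped Classical in
/-- The base points of the preimages counted by `𝔫(τ,R;n)` (see `ncard_skew_preimages_eq`);
the points of `E^{-n} x` are listed through the coding. -/
def conePreimages (E : ExpMap r ℓ) {s : ℕ∞} (τ : CrFun s) (g : Fin ℓ → 𝕊 → 𝕊) (R : ℝ)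
    (n : ℕ) (x : 𝕊) (v : Fin 2 → ℝ) : Finset 𝕊 :=
  {y ∈ univ.image fun α : Fin n → Fin ℓ => codePt g α x |
    v ∈ (JacnB E τ n y).mulVec '' E.cone R}

section Counting

open scoped Classical

variable {E : ExpMap r ℓ} {s : ℕ∞} {τ : CrFun s} {g : Fin ℓ → 𝕊 → 𝕊} {R : ℝ}

lemma mem_conePreimages (hg : IsInverseBranches E g) {n : ℕ} {x y : 𝕊} {v : Fin 2 → ℝ} :
    y ∈ conePreimages E τ g R n x v ↔
      E.map^[n] y = x ∧ v ∈ (JacnB E τ n y).mulVec '' E.cone R := by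
  simp [conePreimages, hg.map_iterate_eq_iff]

lemma card_conePreimages_le (n : ℕ) (x : 𝕊) (v : Fin 2 → ℝ) :
    #(conePreimages E τ g R n x v) ≤ ℓ ^ n :=
  (card_filter_le _ _).trans (card_image_le.trans (by simp))

lemma ncard_skew_preimages_eq (hg : IsInverseBranches E g) (n : ℕ) (z : 𝕊 × 𝕊)
    (v : Fin 2 → ℝ) :
    {ζ : 𝕊 × 𝕊 | (skew E τ)^[n] ζ = z ∧ v ∈ (Jacn E τ n ζ).mulVec '' E.cone R}.ncard =
      #(conePreimages E τ g R n z.1 v) := by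
  rw [← Set.ncard_coe_finset, ← Set.InjOn.ncard_image (f := Prod.fst)]
  · congr 1
    ext y
    simp only [Set.mem_image, Set.mem_ofPred_eq, Finset.mem_coe, mem_conePreimages hg,
      Jacn_eq_JacnB]
    constructor
    · rintro ⟨ζ, ⟨hζ, hv⟩, rfl⟩
      exact ⟨by rw [← skew_iterate_fst, hζ], hv⟩
    · rintro ⟨hy, hv⟩
      obtain ⟨t, ht⟩ := exists_skew_iterate_eq (τ := τ) hy
      exact ⟨(y, t), ⟨ht, hv⟩, rfl⟩
  · rintro ζ₁ ⟨h₁, -⟩ ζ₂ ⟨h₂, -⟩ h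
    exact eq_of_skew_iterate_eq_of_fst_eq (h₁.trans h₂.symm) h

lemma nQ_eq_sSup (hg : IsInverseBranches E g) (n : ℕ) :
    nQ E τ R n = sSup {c : ℝ | ∃ x v, IsUnitVec v ∧ c = #(conePreimages E τ g R n x v)} := by
  unfold nQ
  congr 1
  ext c
  constructor
  · rintro ⟨z, v, hv, rfl⟩
    exact ⟨z.1, v, hv, by rw [ncard_skew_preimages_eq hg]⟩
  · rintro ⟨x, v, hv, rfl⟩
    exact ⟨(x, 0), v, hv, by rw [ncard_skew_preimages_eq hg]⟩

lemma card_conePreimages_le_nQ (hg : IsInverseBranches E g) {n : ℕ} (x : 𝕊)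
    {v : Fin 2 → ℝ} (hv : IsUnitVec v) : (#(conePreimages E τ g R n x v) : ℝ) ≤ nQ E τ R n := by
  rw [nQ_eq_sSup hg]
  refine le_csSup ⟨(ℓ ^ n : ℕ), ?_⟩ ⟨x, v, hv, rfl⟩
  rintro c ⟨x, v, -, rfl⟩
  exact_mod_cast card_conePreimages_le n x v

lemma exists_card_conePreimages_eq_nQ (hg : IsInverseBranches E g) (n : ℕ) :
    ∃ x v, IsUnitVec v ∧ (#(conePreimages E τ g R n x v) : ℝ) = nQ E τ R n := by
  have hfin : {c : ℝ | ∃ x v, IsUnitVec v ∧ c = #(conePreimages E τ g R n x v)}.Finite := by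
    refine ((Set.finite_Iic (ℓ ^ n)).image (Nat.cast : ℕ → ℝ)).subset ?_
    rintro c ⟨x, v, -, rfl⟩
    exact ⟨_, card_conePreimages_le n x v, rfl⟩
  have hne : {c : ℝ | ∃ x v, IsUnitVec v ∧ c = #(conePreimages E τ g R n x v)}.Nonempty :=
    ⟨_, 0, ![1, 0], by simp [IsUnitVec], rfl⟩
  obtain ⟨x, v, hv, hxv⟩ := hne.csSup_mem hfin
  exact ⟨x, v, hv, by rw [nQ_eq_sSup hg, hxv]⟩

lemma one_le_nQ (hg : IsInverseBranches E g) (hs : 1 ≤ s) (hR : 0 ≤ R) (n : ℕ) :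
    1 ≤ nQ E τ R n := by
  have hw : (![1, 0] : Fin 2 → ℝ) ∈ E.cone R := by
    show |(0 : ℝ)| ≤ R / (E.lam - 1) * |(1 : ℝ)|
    simpa using div_nonneg hR (by linarith [E.one_lt_lam])
  have hu : (JacnB E τ n 0).mulVec ![1, 0] ≠ 0 := by
    intro h
    have hinj := Matrix.mulVec_injective_iff_isUnit.2
      ((Matrix.isUnit_iff_isUnit_det _).2 (isUnit_det_JacnB (E := E) (τ := τ) hs n 0))
    simpa using congrFun (hinj (h.trans (Matrix.mulVec_zero _).symm)) 0
  obtain ⟨c, hc⟩ := exists_isUnitVec_smul hu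
  have hmem : (0 : 𝕊) ∈ conePreimages E τ g R n (E.map^[n] 0) (c • _) :=
    (mem_conePreimages hg).2 ⟨rfl, smul_mem_image_mulVec_cone c ⟨_, hw, rfl⟩⟩
  calc (1 : ℝ) ≤ #(conePreimages E τ g R n (E.map^[n] 0) (c • _)) := by
        exact_mod_cast card_pos.2 ⟨_, hmem⟩
    _ ≤ nQ E τ R n := card_conePreimages_le_nQ hg _ hc

lemma card_fiber_conePreimages_le_nQ (hg : IsInverseBranches E g) (hs : 1 ≤ s) {L p : ℕ}
    (hpL : p ≤ L) (x w : 𝕊) {v : Fin 2 → ℝ} (hv : IsUnitVec v) :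
    (#{y ∈ conePreimages E τ g R L x v | E.map^[L - p] y = w} : ℝ) ≤ nQ E τ R (L - p) := by
  set M := JacnB E τ p w
  have hM : IsUnit M.det := isUnit_det_JacnB hs p w
  have hu : M⁻¹.mulVec v ≠ 0 := fun h => hv.ne_zero <| by
    rw [← Matrix.one_mulVec v, ← Matrix.mul_nonsing_inv M hM, ← Matrix.mulVec_mulVec, h,
      Matrix.mulVec_zero]
  obtain ⟨c, hc⟩ := exists_isUnitVec_smul hu
  refine le_trans ?_ (card_conePreimages_le_nQ hg w hc)
  gcongr
  intro y hy
  obtain ⟨hyx, hyw⟩ := mem_filter.1 hy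
  obtain ⟨-, k, hk, hkv⟩ := (mem_conePreimages hg).1 hyx
  refine (mem_conePreimages hg).2 ⟨hyw, smul_mem_image_mulVec_cone c ⟨k, hk, ?_⟩⟩
  rw [← hkv, JacnB_sub hpL, hyw, ← Matrix.mulVec_mulVec, Matrix.mulVec_mulVec _ M⁻¹,
    Matrix.nonsing_inv_mul M hM, Matrix.one_mulVec]

lemma nQ_add_le_mul_of_card_fiber_le (hg : IsInverseBranches E g) {R' c : ℝ} {p k : ℕ}
    (hmaps : ∀ y, ∀ w ∈ E.cone R', (JacnB E τ k y).mulVec w ∈ E.cone R)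
    (hc : ∀ x v w, IsUnitVec v →
      (#{y ∈ conePreimages E τ g R' (p + k) x v | E.map^[k] y = w} : ℝ) ≤ c) :
    nQ E τ R' (p + k) ≤ nQ E τ R p * c := by
  obtain ⟨x, v, hv, hxv⟩ := exists_card_conePreimages_eq_nQ (τ := τ) (R := R') hg (p + k)
  have hc0 : 0 ≤ c := (Nat.cast_nonneg _).trans (hc x v x hv)
  rw [← hxv]
  refine (cast_card_le_card_mul_of_maps_to (t := conePreimages E τ g R p x v) ?_
    fun w _ => hc x v w hv).trans (by gcongr; exact card_conePreimages_le_nQ hg x hv)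
  intro y hy
  obtain ⟨hyx, w, hw, hwv⟩ := (mem_conePreimages hg).1 hy
  refine (mem_conePreimages hg).2 ⟨?_, _, hmaps y w hw, ?_⟩
  · rw [← Function.iterate_add_apply, hyx]
  · rw [Matrix.mulVec_mulVec, ← JacnB_add, hwv]

lemma nQ_add_le_mul (hg : IsInverseBranches E g) (hs : 1 ≤ s) (hR : τ.dsup ≤ R) (m n : ℕ) :
    nQ E τ R (m + n) ≤ nQ E τ R m * nQ E τ R n := by
  refine nQ_add_le_mul_of_card_fiber_le hg
    (fun y w hw => JacnB_mulVec_mem_cone hs hR ?_ y hw) fun x v w hv => ?_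
  · nlinarith [one_le_pow₀ (n := n) E.one_lt_lam.le]
  · simpa only [Nat.add_sub_cancel_left] using
      card_fiber_conePreimages_le_nQ hg hs (Nat.le_add_right m n) x w hv

lemma nQ_add_le_mul_pow (hg : IsInverseBranches E g) (hs : 1 ≤ s) (hR : τ.dsup ≤ R)
    {R' : ℝ} {k : ℕ} (hR' : R' ≤ R + (R - τ.dsup) * (E.lam ^ k - 1)) (n : ℕ) :
    nQ E τ R' (n + k) ≤ nQ E τ R n * ℓ ^ k := by
  refine nQ_add_le_mul_of_card_fiber_le hg
    (fun y w hw => JacnB_mulVec_mem_cone hs hR hR' y hw) fun x v w _ => ?_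
  have hsub : {y ∈ conePreimages E τ g R' (n + k) x v | E.map^[k] y = w} ⊆
      univ.image fun α : Fin k → Fin ℓ => codePt g α w := fun y hy => by
    obtain ⟨α, hα⟩ := hg.exists_codePt_eq (mem_filter.1 hy).2
    exact mem_image.2 ⟨α, mem_univ _, hα⟩
  exact_mod_cast (Finset.card_le_card hsub).trans (card_image_le.trans (by simp))

lemma subadditive_log_nQ (hg : IsInverseBranches E g) (hs : 1 ≤ s) (hR : τ.dsup ≤ R) :
    Subadditive fun n => log (nQ E τ R n) := fun m n => by
  have hR0 : 0 ≤ R := (τ.dsup_nonneg hs).trans hR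
  have h := fun k => one_pos.trans_le (one_le_nQ (τ := τ) hg hs hR0 k)
  rw [← log_mul (h m).ne' (h n).ne']
  exact log_le_log (h _) (nQ_add_le_mul hg hs hR m n)

lemma bddBelow_log_nQ_div (hg : IsInverseBranches E g) (hs : 1 ≤ s) (hR : 0 ≤ R) :
    BddBelow (Set.range fun n : ℕ => log (nQ E τ R n) / n) :=
  ⟨0, by rintro _ ⟨n, rfl⟩; exact div_nonneg (log_nonneg (one_le_nQ hg hs hR n)) n.cast_nonneg⟩

lemma nlim_eq_exp_lim (hg : IsInverseBranches E g) (hs : 1 ≤ s) :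
    nlim E τ = exp (subadditive_log_nQ (τ := τ) hg hs (R := τ.dsup + 1) (by linarith)).lim := by
  have hR0 : 0 ≤ τ.dsup + 1 := by linarith [τ.dsup_nonneg hs]
  refine Filter.Tendsto.limUnder_eq ?_
  have hlim := (subadditive_log_nQ (τ := τ) hg hs (by linarith)).tendsto_lim
    (bddBelow_log_nQ_div hg hs hR0)
  refine hlim.rexp.congr fun n => ?_
  rw [rpow_def_of_pos (one_pos.trans_le (one_le_nQ hg hs hR0 n)), div_eq_mul_inv]

/-- The growth rate does not depend on `R`: after `m₀` steps `Df^{m₀}` squeezes `K_{‖τ'‖+1}` into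
`K_R`, at the cost of the factor `ℓ^{m₀}` bounding the number of `m₀`-th preimages. -/
lemma exp_mul_le_nQ (hg : IsInverseBranches E g) (hs : 1 ≤ s) (hR : τ.dsup < R) {ρ : ℝ}
    (hρ : exp ρ ≤ nlim E τ) (n : ℕ) : exp (ρ * n) ≤ nQ E τ R n := by
  have hd := τ.dsup_nonneg hs
  obtain ⟨m₀, hm₀⟩ := pow_unbounded_of_one_lt ((τ.dsup + 1 - R) / (R - τ.dsup) + 1)
    E.one_lt_lam
  have hR₀ : τ.dsup + 1 ≤ R + (R - τ.dsup) * (E.lam ^ m₀ - 1) := by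
    rw [← lt_sub_iff_add_lt, div_lt_iff₀ (by linarith)] at hm₀
    linarith
  have hshift (k : ℕ) : log (nQ E τ (τ.dsup + 1) (k + m₀)) ≤ log (nQ E τ R k) + m₀ * log ℓ := by
    have hpos := one_pos.trans_le (one_le_nQ (τ := τ) hg hs (R := R) (by linarith) k)
    rw [← log_pow, ← log_mul hpos.ne' (pow_pos (Nat.cast_pos.2 hg.pos) m₀).ne']
    exact log_le_log (one_pos.trans_le (one_le_nQ hg hs (by linarith) _))
      (nQ_add_le_mul_pow hg hs hR.le hR₀ k)
  have hlim : ρ ≤ (subadditive_log_nQ (τ := τ) hg hs hR.le).lim := by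
    refine le_trans ?_ (Subadditive.lim_le_lim_of_le_add (subadditive_log_nQ hg hs (by linarith))
      _ (bddBelow_log_nQ_div hg hs (by linarith)) (bddBelow_log_nQ_div hg hs (by linarith))
      hshift)
    rwa [nlim_eq_exp_lim hg hs, exp_le_exp] at hρ
  rcases n.eq_zero_or_pos with rfl | hn
  · simpa using one_le_nQ hg hs (by linarith) 0
  rw [← exp_log (one_pos.trans_le (one_le_nQ hg hs (by linarith) n)), exp_le_exp,
    ← le_div_iff₀ (by positivity)]
  exact hlim.trans ((subadditive_log_nQ hg hs hR.le).lim_le_div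
    (bddBelow_log_nQ_div hg hs (by linarith)) hn.ne')

lemma card_words_eq_card_conePreimages (hg : IsInverseBranches E g) (n : ℕ) (x : 𝕊)
    (v : Fin 2 → ℝ) :
    #{α : Fin n → Fin ℓ | v ∈ (JacnB E τ n (codePt g α x)).mulVec '' E.cone R} =
      #(conePreimages E τ g R n x v) := by
  rw [conePreimages, filter_image, card_image_of_injective _ (hg.codePt_injective x)]

lemma card_filter_trunc_le_nQ (hg : IsInverseBranches E g) (hs : 1 ≤ s) {n q : ℕ}
    (hqn : q ≤ n) {x : 𝕊} {v : Fin 2 → ℝ} (hv : IsUnitVec v) (G : Finset (Fin n → Fin ℓ))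
    (hG : ∀ α ∈ G, v ∈ (JacnB E τ n (codePt g α x)).mulVec '' E.cone R) (β : Fin q → Fin ℓ) :
    (#{α ∈ G | trunc α q hqn = β} : ℝ) ≤ nQ E τ R (n - q) := by
  refine le_trans ?_ (card_fiber_conePreimages_le_nQ hg hs hqn x (codePt g β x) hv)
  refine Nat.cast_le.2 (card_le_card_of_injOn (codePt g · x) (fun α hα => ?_)
    ((hg.codePt_injective x).injOn))
  obtain ⟨hαG, rfl⟩ := mem_filter.1 hα
  exact mem_filter.2 ⟨(mem_conePreimages hg).2 ⟨hg.map_iterate_codePt_self α x, hG α hαG⟩,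
    hg.map_iterate_codePt hqn α x⟩

end Counting

theorem stmt8_general (r ℓ : ℕ) (hr : 2 ≤ r) (E : ExpMap r ℓ) (τ : CrFun r)
    (g : Fin ℓ → 𝕊 → 𝕊)
    (hg_sec : ∀ (j : Fin ℓ) (y : 𝕊), E.map (g j y) = y)
    (hg_part : ∀ z : 𝕊, ∃! p : Fin ℓ × 𝕊, g p.1 p.2 = z)
    (R : ℝ) (hR : τ.dsup < R)
    (ρ : ℝ) (hρ : 0 < ρ)
    (J : ℕ) (hJ : 1 ≤ J) (a b : Fin J → ℝ)
    (hcover : Set.Icc (Real.log E.lam) (Real.log E.Lam) ⊆ ⋃ j : Fin J, Set.Ioo (a j) (b j))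
    (N : ℕ)
    (q : ℕ) (hq : ((q + 1) * N : ℝ) * Real.exp (-(q : ℝ) * ρ / 2) < 1 / (4 * J))
    (hcap : Real.exp ρ ≤ nlim E τ) :
    ∀ n₀ : ℕ, ∃ n : ℕ, n₀ ≤ n ∧ ∃ hqn : q ≤ n,
      ∃ (x : 𝕊) (s : 𝕊) (v₀ : Fin 2 → ℝ), IsUnitVec v₀ ∧
        ∃ (j : Fin J) (B : Finset (Fin q → Fin ℓ)), B.card = 2 * (q + 1) * N ∧
          ∃ Sig : (Fin q → Fin ℓ) → Finset (Fin n → Fin ℓ),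
            ∀ β ∈ B,
              Real.exp (ρ * n) * (ℓ : ℝ) ^ (-(q : ℤ)) / (2 * J) ≤ ((Sig β).card : ℝ) ∧
              ∀ α ∈ Sig β,
                trunc α q hqn = β ∧
                v₀ ∈ (JacnB E τ n (codePt g α x)).mulVec '' E.cone R ∧
                E.derivn n (codePt g α x) ∈
                  Set.Icc (Real.exp (a j * n)) (Real.exp (b j * n)) := by
  classical
  intro n₀
  have hg : IsInverseBranches E g := ⟨hg_sec, hg_part⟩
  have hs : (1 : ℕ∞) ≤ r := by exact_mod_cast (by omega : 1 ≤ r)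
  have hlow := exp_mul_le_nQ hg hs hR hcap
  obtain ⟨n, hn₀, hqn, hgrowth⟩ := exists_le_mul_exp_half hρ hlow q n₀
  obtain ⟨x, v, hv, hxv⟩ := exists_card_conePreimages_eq_nQ (τ := τ) (R := R) hg n
  set T := ({α | v ∈ (JacnB E τ n (codePt g α x)).mulVec '' E.cone R} : Finset (Fin n → Fin ℓ))
  obtain ⟨j, hj⟩ := E.exists_le_card_filter_derivn_mem_Icc_exp (by omega) hcover hJ
    (by omega : 0 < n) T (codePt g · x)
  set G := {α ∈ T | E.derivn n (codePt g α x) ∈ Icc (exp (a j * n)) (exp (b j * n))}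
  have hθ : (Fintype.card (Fin q → Fin ℓ) : ℝ) * (exp (ρ * n) * (ℓ : ℝ) ^ (-(q : ℤ)) / (2 * J)) =
      exp (ρ * n) / (2 * J) := by
    have : (ℓ : ℝ) ≠ 0 := by exact_mod_cast hg.pos.ne'
    simp only [Fintype.card_pi, Fintype.card_fin, prod_const, card_univ, Nat.cast_pow, zpow_neg,
      zpow_natCast]
    field_simp
  have hQ' : 0 < nQ E τ R (n - q) :=
    one_pos.trans_le (one_le_nQ hg hs (by linarith [τ.dsup_nonneg hs]) _)
  obtain ⟨B, hB, hBθ⟩ := exists_heavy_fibers G (trunc · q hqn.le)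
    (θ := exp (ρ * n) * (ℓ : ℝ) ^ (-(q : ℤ)) / (2 * J)) (by positivity) hQ'
    (card_filter_trunc_le_nQ hg hs hqn.le hv G fun α hα => (mem_filter.1 (mem_filter.1 hα).1).2)
    (M := 2 * (q + 1) * N) (by
      rw [hθ]; push_cast
      exact mul_lt_sub_of_exp_growth hJ hQ' hq hgrowth (hlow n)
        (by rwa [← hxv, ← card_words_eq_card_conePreimages hg]))
  refine ⟨n, hn₀, hqn.le, x, 0, v, hv, j, B, hB, fun β => {α ∈ G | trunc α q hqn.le = β},
    fun β hβ => ⟨hBθ β hβ, fun α hα => ?_⟩⟩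
  simp only [G, T, mem_filter, Finset.mem_univ, true_and] at hα
  exact ⟨hα.2, hα.1.1, hα.1.2⟩

/-- Proposition 3.3. Suppose `g` is the system of inverse branches of `E`
coming from the symbolic coding (each branch is a right inverse of `E` and every point of
the circle lies in the image of exactly one branch, at a unique point). Fix `ρ > 0`, a
cover of `[log λ, log Λ]` by open intervals `I_j = (a_j, b_j)`, `j < J`, of length `< ρ/3`,
set `N = ⌈6 ρ⁻¹ log ⌈2Λ⌉⌉` and choose `q` with `(q+1) N e^{-qρ/2} < 1/(4J)`. If
`𝔫(τ) ≥ e^ρ`, then for arbitrarily large `n` there are a point `z₀ = (x,s) ∈ 𝕋²`, a unit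
vector `v₀`, an index `j < J`, a set `B ⊆ A^q` with `#B = 2(q+1)N`, and sets
`Σ(β) ⊆ A^n` for `β ∈ B` with `#Σ(β) ≥ e^{ρn} ℓ^{-q} / (2J)`, such that every `α ∈ Σ(β)`
satisfies `[α]_q = β`, `v₀ ∈ Df^n(x_α) K_R` and `(E^n)'(x_α) ∈ [e^{a_j n}, e^{b_j n}]`. -/
theorem stmt8 (r ℓ : ℕ) (hr : 2 ≤ r) (hl : 2 ≤ ℓ) (E : ExpMap r ℓ) (τ : CrFun r)
    (g : Fin ℓ → 𝕊 → 𝕊)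
    (hg_sec : ∀ (j : Fin ℓ) (y : 𝕊), E.map (g j y) = y)
    (hg_part : ∀ z : 𝕊, ∃! p : Fin ℓ × 𝕊, g p.1 p.2 = z)
    (R : ℝ) (hR : τ.dsup < R)
    (ρ : ℝ) (hρ : 0 < ρ)
    (J : ℕ) (hJ : 1 ≤ J) (a b : Fin J → ℝ)
    (hlen : ∀ j : Fin J, b j - a j < ρ / 3)
    (hcover : Set.Icc (Real.log E.lam) (Real.log E.Lam) ⊆ ⋃ j : Fin J, Set.Ioo (a j) (b j))
    (N : ℕ) (hN : N = ⌈6 / ρ * Real.log (⌈(2:ℝ) * E.Lam⌉₊ : ℝ)⌉₊)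
    (q : ℕ) (hq : ((q + 1) * N : ℝ) * Real.exp (-(q : ℝ) * ρ / 2) < 1 / (4 * J))
    (hcap : Real.exp ρ ≤ nlim E τ) :
    ∀ n₀ : ℕ, ∃ n : ℕ, n₀ ≤ n ∧ ∃ hqn : q ≤ n,
      ∃ (x : 𝕊) (s : 𝕊) (v₀ : Fin 2 → ℝ), IsUnitVec v₀ ∧
        ∃ (j : Fin J) (B : Finset (Fin q → Fin ℓ)), B.card = 2 * (q + 1) * N ∧
          ∃ Sig : (Fin q → Fin ℓ) → Finset (Fin n → Fin ℓ),
            ∀ β ∈ B,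
              Real.exp (ρ * n) * (ℓ : ℝ) ^ (-(q : ℤ)) / (2 * J) ≤ ((Sig β).card : ℝ) ∧
              ∀ α ∈ Sig β,
                trunc α q hqn = β ∧
                v₀ ∈ (JacnB E τ n (codePt g α x)).mulVec '' E.cone R ∧
                E.derivn n (codePt g α x) ∈
                  Set.Icc (Real.exp (a j * n)) (Real.exp (b j * n)) :=
  stmt8_general r ℓ hr E τ g hg_sec hg_part R hR ρ hρ J hJ a b hcover N q hq hcap
end
end

section
/- For each pair of dimensions there is a constant C depending only on the dimension of the domain such that: for every surjective affine map M : E → F between Euclidean spaces and every measurable set X ⊂ F, the Lebesgue measure of {z ∈ E : ‖z‖ ≤ 1, M(z) ∈ X} is at most C · Jac(M)^{−1} · Leb_F(X). -/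
noncomputable section

open Filter Set Topology MeasureTheory

variable {r ℓ : ℕ}

/-! Let `L` be the linear part of `M`. In an orthonormal basis of `ℝ^d` whose first vectors span
`ker L` and whose last `e` vectors span `(ker L)ᗮ`, `L` factors as `B ∘ π`, where `π` reads off the
last `e` coordinates and `B` is an automorphism of `ℝ^e`; orthonormality of the rows of `π` gives
`Jac(L) = |det B|`. The unit ball lies in the cylinder `[-1,1]^(dim ker L) × ℝ^e`, so the set in
question has measure at most `2^(dim ker L) · Leb(B⁻¹(X - M 0)) ≤ 2^d · |det B|⁻¹ · Leb(X)`. -/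

open Module
open scoped ENNReal

theorem LinearMap.exists_orthonormalBasis_apply_inl_eq_zero {E : Type*} [NormedAddCommGroup E] [InnerProductSpace ℝ E]
    [FiniteDimensional ℝ E] {ι : Type*} [Fintype ι] (L : E →ₗ[ℝ] EuclideanSpace ℝ ι)
    (hL : Function.Surjective L) :
    ∃ b : OrthonormalBasis (Fin (finrank ℝ (LinearMap.ker L)) ⊕ ι) ℝ E,
      ∀ k, L (b (Sum.inl k)) = 0 := by
  have hK : Fintype.card ι = finrank ℝ (LinearMap.ker L)ᗮ := by
    have := LinearMap.finrank_range_add_finrank_ker L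
    rw [LinearMap.range_eq_top.mpr hL, finrank_top, finrank_euclideanSpace,
      ← (LinearMap.ker L).finrank_add_finrank_orthogonal] at this
    omega
  let bO := (stdOrthonormalBasis ℝ (LinearMap.ker L)ᗮ).reindex (Fintype.equivFinOfCardEq hK).symm
  refine ⟨((stdOrthonormalBasis ℝ _).prod bO).map
    (LinearMap.ker L).orthogonalDecomposition.symm, fun k => ?_⟩
  simp

namespace OrthonormalBasis

variable {E : Type*} [NormedAddCommGroup E] [InnerProductSpace ℝ E]
  {ι ι' : Type*} [Fintype ι] [Fintype ι']

def reprInr (b : OrthonormalBasis (ι' ⊕ ι) ℝ E) : E →ₗ[ℝ] EuclideanSpace ℝ ι where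
  toFun z := WithLp.toLp 2 fun i => b.repr z (Sum.inr i)
  map_add' _ _ := by ext; simp
  map_smul' _ _ := by ext; simp

@[simp]
theorem reprInr_apply (b : OrthonormalBasis (ι' ⊕ ι) ℝ E) (z : E) (i : ι) :
    b.reprInr z i = b.repr z (Sum.inr i) := rfl

theorem exists_comp_reprInr_eq {F : Type*} [AddCommGroup F] [Module ℝ F]
    (b : OrthonormalBasis (ι' ⊕ ι) ℝ E) (L : E →ₗ[ℝ] F) (hL : ∀ k, L (b (Sum.inl k)) = 0) :
    ∃ B : EuclideanSpace ℝ ι →ₗ[ℝ] F, B ∘ₗ b.reprInr = L := by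
  refine ⟨L ∘ₗ Fintype.linearCombination ℝ (b ∘ Sum.inr) ∘ₗ
    (WithLp.linearEquiv 2 ℝ (ι → ℝ)).toLinearMap, LinearMap.ext fun z => ?_⟩
  conv_rhs => rw [← b.sum_repr z]
  simp [Fintype.linearCombination_apply, Fintype.sum_sum_type, hL]

theorem toMatrix_reprInr_mul_transpose {κ : Type*} [Fintype κ] [DecidableEq κ] [DecidableEq ι]
    (b : OrthonormalBasis (ι' ⊕ ι) ℝ (EuclideanSpace ℝ κ)) :
    let N := LinearMap.toMatrix (EuclideanSpace.basisFun κ ℝ).toBasis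
      (EuclideanSpace.basisFun ι ℝ).toBasis b.reprInr
    N * N.transpose = 1 := by
  ext i i'
  have hN : ∀ j x, LinearMap.toMatrix (EuclideanSpace.basisFun κ ℝ).toBasis
      (EuclideanSpace.basisFun ι ℝ).toBasis b.reprInr j x =
        inner ℝ (b (Sum.inr j)) (EuclideanSpace.basisFun κ ℝ x) := fun j x => by
    rw [LinearMap.toMatrix_apply, OrthonormalBasis.coe_toBasis_repr_apply,
      EuclideanSpace.basisFun_repr, OrthonormalBasis.coe_toBasis, reprInr_apply,
      OrthonormalBasis.repr_apply_apply]
  simp only [Matrix.mul_apply, Matrix.transpose_apply, hN]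
  simp_rw [real_inner_comm _ (b (Sum.inr i'))]
  classical
  rw [OrthonormalBasis.sum_inner_mul_inner, orthonormal_iff_ite.mp b.orthonormal, Matrix.one_apply]
  simp

theorem volume_norm_le_one_and_reprInr_mem_le [FiniteDimensional ℝ E] [MeasurableSpace E]
    [BorelSpace E] (b : OrthonormalBasis (ι' ⊕ ι) ℝ E) (Y : Set (EuclideanSpace ℝ ι)) :
    volume {z : E | ‖z‖ ≤ 1 ∧ b.reprInr z ∈ Y} ≤ 2 ^ Fintype.card ι' * volume Y := by
  set box : Set (ι' → ℝ) := univ.pi fun _ => Icc (-1) 1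
  have hsplit : MeasurePreserving (MeasurableEquiv.sumPiEquivProdPi (fun _ : ι' ⊕ ι => ℝ) ∘
      WithLp.ofLp ∘ b.repr) :=
    (measurePreserving_sumPiEquivProdPi _).comp ((PiLp.volume_preserving_ofLp _).comp
      b.measurePreserving_repr)
  have hsub : {z : E | ‖z‖ ≤ 1 ∧ b.reprInr z ∈ Y} ⊆
      (MeasurableEquiv.sumPiEquivProdPi (fun _ : ι' ⊕ ι => ℝ) ∘ WithLp.ofLp ∘ b.repr) ⁻¹'
        (box ×ˢ (WithLp.toLp 2 ⁻¹' Y)) := by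
    rintro z ⟨hz, hY⟩
    refine ⟨fun k _ => abs_le.mp ?_, hY⟩
    calc |b.repr z (Sum.inl k)| = ‖b.repr z (Sum.inl k)‖ := (Real.norm_eq_abs _).symm
      _ ≤ ‖b.repr z‖ := PiLp.norm_apply_le _ _
      _ ≤ 1 := by rwa [b.repr.norm_map]
  have hbox : volume box = 2 ^ Fintype.card ι' := by
    rw [volume_pi_pi]
    norm_num [Real.volume_Icc]
  calc volume {z : E | ‖z‖ ≤ 1 ∧ b.reprInr z ∈ Y}
      ≤ volume (box ×ˢ (WithLp.toLp 2 ⁻¹' Y)) :=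
        (measure_mono hsub).trans (hsplit.measure_preimage_le _)
    _ = 2 ^ Fintype.card ι' * volume (WithLp.toLp 2 ⁻¹' Y) := by
      rw [Measure.volume_eq_prod, Measure.prod_prod, hbox]
    _ ≤ 2 ^ Fintype.card ι' * volume Y := by
      gcongr
      exact (PiLp.volume_preserving_toLp ι).measure_preimage_le Y

end OrthonormalBasis

theorem gramJac_mul_of_mul_transpose_eq_one {p m : ℕ} (A : Matrix (Fin p) (Fin p) ℝ)
    (N : Matrix (Fin p) (Fin m) ℝ) (hN : N * N.transpose = 1) : gramJac (A * N) = |A.det| := by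
  rw [gramJac, Matrix.transpose_mul, Matrix.mul_assoc, ← Matrix.mul_assoc N, hN, Matrix.one_mul,
    Matrix.det_mul, Matrix.det_transpose, ← sq, Real.sqrt_sq_eq_abs]

theorem linJac_comp_reprInr {d e : ℕ} {ι' : Type*} [Fintype ι']
    (B : EuclideanSpace ℝ (Fin e) →ₗ[ℝ] EuclideanSpace ℝ (Fin e))
    (b : OrthonormalBasis (ι' ⊕ Fin e) ℝ (EuclideanSpace ℝ (Fin d))) :
    linJac (B ∘ₗ b.reprInr) = |LinearMap.det B| := by
  rw [linJac, LinearMap.toMatrix_comp _ (EuclideanSpace.basisFun (Fin e) ℝ).toBasis,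
    gramJac_mul_of_mul_transpose_eq_one _ _ b.toMatrix_reprInr_mul_transpose,
    LinearMap.det_toMatrix]

/-- For each dimension `d` of the domain there is a constant `C > 0`
(depending only on `d`) such that for every surjective affine map
`M : ℝ^d → ℝ^e` between Euclidean spaces and every measurable `X ⊆ ℝ^e`,
`Leb {z : ‖z‖ ≤ 1, M z ∈ X} ≤ C ⬝ Jac(M)⁻¹ ⬝ Leb(X)`. -/
theorem stmt10 (d : ℕ) :
    ∃ C : ℝ, 0 < C ∧
      ∀ (e : ℕ) (M : EuclideanSpace ℝ (Fin d) →ᵃ[ℝ] EuclideanSpace ℝ (Fin e)),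
        Function.Surjective M →
        ∀ X : Set (EuclideanSpace ℝ (Fin e)), MeasurableSet X →
          volume {z : EuclideanSpace ℝ (Fin d) | ‖z‖ ≤ 1 ∧ M z ∈ X} ≤
            ENNReal.ofReal (C * (linJac M.linear)⁻¹) * volume X := by
  refine ⟨2 ^ d, by positivity, fun e M hM X _ => ?_⟩
  have hL := M.linear_surjective_iff.mpr hM
  obtain ⟨b, hb⟩ := M.linear.exists_orthonormalBasis_apply_inl_eq_zero hL
  obtain ⟨B, hB⟩ := b.exists_comp_reprInr_eq M.linear hb
  have hdet : LinearMap.det B ≠ 0 := by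
    rw [← hB, LinearMap.coe_comp] at hL
    rw [Ne, LinearMap.det_eq_zero_iff_ker_ne_bot, not_not, LinearMap.ker_eq_bot]
    exact LinearMap.injective_iff_surjective.mpr hL.of_comp
  have hset : {z | ‖z‖ ≤ 1 ∧ M z ∈ X} =
      {z | ‖z‖ ≤ 1 ∧ b.reprInr z ∈ B ⁻¹' ((· + M 0) ⁻¹' X)} := by
    ext z
    simp [congrFun M.decomp z, ← hB]
  have hJac : linJac M.linear = |LinearMap.det B| := by rw [← hB, linJac_comp_reprInr]
  calc volume {z | ‖z‖ ≤ 1 ∧ M z ∈ X}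
      ≤ 2 ^ finrank ℝ (LinearMap.ker M.linear) * volume (B ⁻¹' ((· + M 0) ⁻¹' X)) := by
        rw [hset]
        simpa only [Fintype.card_fin] using b.volume_norm_le_one_and_reprInr_mem_le _
    _ = 2 ^ finrank ℝ (LinearMap.ker M.linear) *
          (ENNReal.ofReal (linJac M.linear)⁻¹ * volume X) := by
        rw [Measure.addHaar_preimage_linearMap _ hdet, measure_preimage_add_right, abs_inv, hJac]
    _ ≤ ENNReal.ofReal (2 ^ d * (linJac M.linear)⁻¹) * volume X := by
        rw [ENNReal.ofReal_mul (by positivity), ENNReal.ofReal_pow zero_le_two,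
          ENNReal.ofReal_ofNat, mul_assoc]
        gcongr
        · norm_num
        · simpa using Submodule.finrank_le (LinearMap.ker M.linear)
end
end

section
/- If τ is cohomologous to a constant, i.e. τ(x) = φ(E(x)) − φ(x) + c for some φ ∈ C^r(S¹) and c ∈ ℝ, then 𝔫(τ) = ℓ. -/
noncomputable section

open Filter Set Topology MeasureTheory

variable {r ℓ : ℕ}

/-!
If `τ = φ ∘ E - φ + c`, then `f (x, φ x + k) = (E x, φ (E x) + k + c)`, so `f` permutes the
graphs of the functions `φ + k`, and `Df` maps the line field spanned by `(1, φ'(x))` to itself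
with positive factors. Differentiating the cohomological equation gives
`φ'(E x) E'(x) = τ'(x) + φ'(x)`, hence `λ ‖φ'‖ ≤ ‖τ'‖ + ‖φ'‖`, i.e. `‖φ'‖ ≤ ‖τ'‖ / (λ - 1) ≤ ϑ_R`:
the invariant line field lies in the cone `K_R`. So for a unit vector `v` along the field at `z`,
every one of the `ℓ ^ n` preimages `ζ ∈ f⁻ⁿ(z)` satisfies `v ∈ Df^n(ζ) K_R`, and
`𝔫(τ, R; n) = ℓ ^ n` for every `n`.
-/

lemma rep_injective : Function.Injective rep :=
  Subtype.val_injective.comp (AddCircle.equivIco 1 0).injective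

lemma range_rep : range rep = Ico 0 1 := by
  change range (Subtype.val ∘ AddCircle.equivIco 1 0) = _
  rw [range_comp, Equiv.range_eq_univ, image_univ, Subtype.range_coe, zero_add]

lemma rep_coe (t : ℝ) : rep (t : 𝕊) = Int.fract t := by
  rw [rep, AddCircle.coe_equivIco_mk_apply, div_one, mul_one]

lemma Function.Periodic.apply_rep {f : ℝ → ℝ} (hf : Function.Periodic f 1) (t : ℝ) :
    f (rep t) = f t := by
  rw [rep_coe, Int.fract]
  simpa using hf.sub_int_mul_eq (x := t) ⌊t⌋

lemma Function.Periodic.abs_le_sSup_Icc {f : ℝ → ℝ} (hf : Function.Periodic f 1)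
    (hc : Continuous f) (t : ℝ) : |f t| ≤ sSup ((fun x => |f x|) '' Icc 0 1) := by
  obtain ⟨y, hy, hfy⟩ := hf.exists_mem_Ico₀ zero_lt_one t
  rw [hfy]
  exact le_csSup (isCompact_Icc.image hc.abs).bddAbove ⟨y, Ico_subset_Icc_self hy, rfl⟩

lemma encard_Ico_inter_coe_preimage (a : ℝ) (n : ℕ) (z : 𝕊) :
    (Ico a (a + n) ∩ ((↑) : ℝ → 𝕊) ⁻¹' {z}).encard = n := by
  induction n with
  | zero => simp
  | succ n ih =>
    have hsplit : Ico a (a + ↑(n + 1)) = Ico a (a + n) ∪ Ico (a + n) (a + n + 1) := by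
      rw [Ico_union_Ico_eq_Ico (by simp) (by simp)]
      push_cast
      ring_nf
    have hone : (Ico (a + n) (a + n + 1) ∩ ((↑) : ℝ → 𝕊) ⁻¹' {z}).encard = 1 := by
      refine encard_eq_one.2 ⟨AddCircle.equivIco 1 (a + n) z, ?_⟩
      ext t
      constructor
      · rintro ⟨ht, rfl⟩
        exact (AddCircle.equivIco_coe_of_mem ht).symm
      · rintro rfl
        exact ⟨(AddCircle.equivIco 1 (a + n) z).2, AddCircle.coe_equivIco⟩
    rw [hsplit, union_inter_distrib_right, encard_union_eq, ih, hone]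
    · push_cast
      rfl
    · exact Ico_disjoint_Ico_same.mono inter_subset_left inter_subset_left

lemma Set.encard_preimage_eq_mul {α β : Type*} {f : α → β} {k : ℕ}
    (hf : ∀ b, (f ⁻¹' {b}).encard = k) {S : Set β} (hS : S.Finite) :
    (f ⁻¹' S).encard = k * S.encard := by
  induction S, hS using Set.Finite.induction_on with
  | empty => simp
  | @insert b S hb _ ih =>
    rw [encard_insert_of_notMem hb, insert_eq, preimage_union,
      encard_union_eq ((disjoint_singleton_left.2 hb).preimage f), hf, ih]
    ring

lemma Set.encard_iterate_preimage_singleton {α : Type*} {f : α → α} {k : ℕ}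
    (hf : ∀ b, (f ⁻¹' {b}).encard = k) (n : ℕ) (b : α) :
    (f^[n] ⁻¹' {b}).encard = (k : ℕ∞) ^ n := by
  induction n generalizing b with
  | zero => simp
  | succ n ih =>
    rw [Function.iterate_succ, preimage_comp,
      encard_preimage_eq_mul hf (finite_of_encard_eq_coe (by rw [ih]; norm_cast)), ih, pow_succ,
      mul_comm]

lemma isUnitVec_inv_sqrt_smul {v : Fin 2 → ℝ} (hv : 0 < v 0 ^ 2 + v 1 ^ 2) :
    IsUnitVec ((√(v 0 ^ 2 + v 1 ^ 2))⁻¹ • v) := by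
  simp only [IsUnitVec, Pi.smul_apply, smul_eq_mul, mul_pow, inv_pow, Real.sq_sqrt hv.le]
  field_simp

namespace ExpMap

variable (E : ExpMap r ℓ)

lemma deriv_pos (x : ℝ) : 0 < deriv E.toFun x :=
  zero_lt_one.trans (E.one_lt_lam.trans_le (E.lam_le_deriv x))

lemma differentiable : Differentiable ℝ E.toFun :=
  fun x => differentiableAt_of_deriv_ne_zero (E.deriv_pos x).ne'

lemma strictMono : StrictMono E.toFun :=
  strictMono_of_deriv_pos E.deriv_pos

lemma surjective : Function.Surjective E.toFun := by
  have hlam : 0 < E.lam := zero_lt_one.trans E.one_lt_lam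
  have hexp := mul_sub_le_image_sub_of_le_deriv E.differentiable E.lam_le_deriv
  refine E.contDiff.continuous.surjective ?_ ?_
  · refine tendsto_atTop_mono' atTop ?_
      (tendsto_atTop_add_const_left _ (E.toFun 0) (tendsto_id.const_mul_atTop hlam))
    filter_upwards [eventually_ge_atTop 0] with x hx
    rw [id_eq]
    linarith [hexp hx]
  · refine tendsto_atBot_mono' atBot ?_
      (tendsto_atBot_add_const_left _ (E.toFun 0) (tendsto_id.const_mul_atBot hlam))
    filter_upwards [eventually_le_atBot 0] with x hx
    rw [id_eq]
    linarith [hexp hx]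

lemma image_Ico (a b : ℝ) : E.toFun '' Ico a b = Ico (E.toFun a) (E.toFun b) := by
  let e : ℝ ≃o ℝ := E.strictMono.orderIsoOfSurjective _ E.surjective
  change e '' _ = Ico (e a) (e b)
  rw [e.image_eq_preimage_symm, e.symm.preimage_Ico, e.symm_symm]

lemma encard_map_preimage_singleton (z : 𝕊) : (E.map ⁻¹' {z}).encard = ℓ := by
  set Q : Set ℝ := ((↑) : ℝ → 𝕊) ⁻¹' {z}
  calc (E.map ⁻¹' {z}).encard = (rep '' (rep ⁻¹' (E.toFun ⁻¹' Q))).encard :=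
        rep_injective.injOn.encard_image.symm
    _ = (E.toFun '' (Ico 0 1 ∩ E.toFun ⁻¹' Q)).encard := by
        rw [image_preimage_eq_inter_range, range_rep, inter_comm,
          E.strictMono.injective.injOn.encard_image]
    _ = (Ico (E.toFun 0) (E.toFun 0 + ℓ) ∩ Q).encard := by
        rw [image_inter_preimage, E.image_Ico, ← zero_add (1 : ℝ), E.degree]
    _ = ℓ := encard_Ico_inter_coe_preimage _ _ _

lemma smul_mem_cone {R : ℝ} {v : Fin 2 → ℝ} (hv : v ∈ E.cone R) (a : ℝ) :
    a • v ∈ E.cone R := by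
  change |a * v 1| ≤ R / (E.lam - 1) * |a * v 0|
  rw [abs_mul, abs_mul, mul_left_comm]
  exact mul_le_mul_of_nonneg_left hv (abs_nonneg a)

end ExpMap

lemma encard_skew_preimage_singleton (E : ExpMap r ℓ) {s : ℕ∞} (τ : CrFun s) (z : 𝕊 × 𝕊) :
    (skew E τ ⁻¹' {z}).encard = ℓ := by
  have hfib : skew E τ ⁻¹' {z} =
      (fun x : 𝕊 => (x, z.2 - ((τ.toFun (rep x) : ℝ) : 𝕊))) '' (E.map ⁻¹' {z.1}) := by
    ext ⟨x, y⟩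
    obtain ⟨z₁, z₂⟩ := z
    simp only [mem_preimage, mem_singleton_iff, skew, mem_image, Prod.mk.injEq]
    constructor
    · rintro ⟨rfl, rfl⟩
      exact ⟨x, rfl, rfl, by abel⟩
    · rintro ⟨x, rfl, rfl, rfl⟩
      exact ⟨rfl, by abel⟩
  rw [hfib, InjOn.encard_image (fun _ _ _ _ h => congrArg Prod.fst h),
    E.encard_map_preimage_singleton]

namespace CrFun

variable {s : ℕ∞} (ψ : CrFun s)

lemma differentiable (hs : 1 ≤ s) : Differentiable ℝ ψ.toFun :=
  ψ.contDiff.differentiable (by exact_mod_cast (zero_lt_one.trans_le hs).ne')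

lemma continuous_deriv (hs : 1 ≤ s) : Continuous (deriv ψ.toFun) :=
  ψ.contDiff.continuous_deriv (by exact_mod_cast hs)

lemma periodic_deriv : Function.Periodic (deriv ψ.toFun) 1 := fun x => by
  rw [← deriv_comp_add_const, funext ψ.periodic]

lemma abs_deriv_le_dsup (hs : 1 ≤ s) (t : ℝ) : |deriv ψ.toFun t| ≤ ψ.dsup :=
  ψ.periodic_deriv.abs_le_sSup_Icc (ψ.continuous_deriv hs) t

def graphDir (x : 𝕊) : Fin 2 → ℝ := ![1, deriv ψ.toFun (rep x)]

end CrFun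

section Cohomologous

variable (E : ExpMap r ℓ) {s : ℕ∞} {τ φ : CrFun s} {c : ℝ}

lemma deriv_add_deriv_of_cohomologous (hs : 1 ≤ s)
    (hcoh : ∀ x, τ.toFun x = φ.toFun (E.toFun x) - φ.toFun x + c) (t : ℝ) :
    deriv τ.toFun t + deriv φ.toFun t = deriv φ.toFun (E.toFun t) * deriv E.toFun t := by
  have hφ := φ.differentiable hs
  have hτ : HasDerivAt τ.toFun
      (deriv φ.toFun (E.toFun t) * deriv E.toFun t - deriv φ.toFun t) t := by
    rw [funext hcoh]
    exact (((hφ _).hasDerivAt.comp t (E.differentiable t).hasDerivAt).sub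
      (hφ t).hasDerivAt).add_const c
  rw [hτ.deriv]
  ring

lemma abs_deriv_le_of_cohomologous (hs : 1 ≤ s)
    (hcoh : ∀ x, τ.toFun x = φ.toFun (E.toFun x) - φ.toFun x + c) (t : ℝ) :
    |deriv φ.toFun t| ≤ τ.dsup / (E.lam - 1) := by
  set M := sSup ((fun x => |deriv φ.toFun x|) '' Icc 0 1)
  have hM : ∀ t, |deriv φ.toFun t| ≤ M :=
    φ.periodic_deriv.abs_le_sSup_Icc (φ.continuous_deriv hs)
  have hlam : 0 < E.lam := zero_lt_one.trans E.one_lt_lam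
  have hexpand : ∀ u, |deriv φ.toFun u| * E.lam ≤ τ.dsup + M := by
    intro u
    obtain ⟨x, rfl⟩ := E.surjective u
    calc |deriv φ.toFun (E.toFun x)| * E.lam
        ≤ |deriv φ.toFun (E.toFun x)| * deriv E.toFun x :=
          mul_le_mul_of_nonneg_left (E.lam_le_deriv x) (abs_nonneg _)
      _ = |deriv τ.toFun x + deriv φ.toFun x| := by
          rw [deriv_add_deriv_of_cohomologous E hs hcoh, abs_mul, abs_of_pos (E.deriv_pos x)]
      _ ≤ τ.dsup + M := (abs_add_le _ _).trans (add_le_add (τ.abs_deriv_le_dsup hs x) (hM x))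
  have hMlam : M ≤ (τ.dsup + M) / E.lam :=
    csSup_le ⟨_, 0, left_mem_Icc.2 zero_le_one, rfl⟩ <| by
      rintro _ ⟨u, -, rfl⟩
      exact (le_div_iff₀ hlam).2 (hexpand u)
  rw [le_div_iff₀ hlam] at hMlam
  rw [le_div_iff₀ (sub_pos.2 E.one_lt_lam)]
  nlinarith [hM t, E.one_lt_lam]

lemma graphDir_mem_cone (hs : 1 ≤ s)
    (hcoh : ∀ x, τ.toFun x = φ.toFun (E.toFun x) - φ.toFun x + c) {R : ℝ} (hR : τ.dsup ≤ R)
    (x : 𝕊) : φ.graphDir x ∈ E.cone R := by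
  change |deriv φ.toFun (rep x)| ≤ R / (E.lam - 1) * |(1 : ℝ)|
  rw [abs_one, mul_one]
  exact (abs_deriv_le_of_cohomologous E hs hcoh _).trans
    (div_le_div_of_nonneg_right hR (sub_pos.2 E.one_lt_lam).le)

lemma jac1_mulVec_graphDir (hs : 1 ≤ s)
    (hcoh : ∀ x, τ.toFun x = φ.toFun (E.toFun x) - φ.toFun x + c) (x : 𝕊) :
    (Jac1 E τ x).mulVec (φ.graphDir x) = deriv E.toFun (rep x) • φ.graphDir (E.map x) := by
  have h := deriv_add_deriv_of_cohomologous E hs hcoh (rep x)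
  have hE : deriv φ.toFun (rep (E.map x)) = deriv φ.toFun (E.toFun (rep x)) :=
    φ.periodic_deriv.apply_rep _
  ext i
  fin_cases i
  · simp [Jac1, CrFun.graphDir, Matrix.mulVec, dotProduct, Fin.sum_univ_two]
  · simpa [Jac1, CrFun.graphDir, Matrix.mulVec, dotProduct, Fin.sum_univ_two, hE, mul_comm]
      using h

lemma exists_jacn_mulVec_graphDir (hs : 1 ≤ s)
    (hcoh : ∀ x, τ.toFun x = φ.toFun (E.toFun x) - φ.toFun x + c) (n : ℕ) (ζ : 𝕊 × 𝕊) :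
    ∃ P : ℝ, 0 < P ∧ (Jacn E τ n ζ).mulVec (φ.graphDir ζ.1) =
      P • φ.graphDir ((skew E τ)^[n] ζ).1 := by
  induction n generalizing ζ with
  | zero => exact ⟨1, one_pos, by simp [Jacn]⟩
  | succ n ih =>
    obtain ⟨P, hP, hPζ⟩ := ih (skew E τ ζ)
    refine ⟨P * deriv E.toFun (rep ζ.1), mul_pos hP (E.deriv_pos _), ?_⟩
    rw [Jacn, ← Matrix.mulVec_mulVec, jac1_mulVec_graphDir E hs hcoh, Matrix.mulVec_smul,
      show E.map ζ.1 = (skew E τ ζ).1 from rfl, hPζ, smul_smul, mul_comm,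
      Function.iterate_succ_apply]

lemma smul_graphDir_mem_jacn_image_cone (hs : 1 ≤ s)
    (hcoh : ∀ x, τ.toFun x = φ.toFun (E.toFun x) - φ.toFun x + c) {R : ℝ} (hR : τ.dsup ≤ R)
    {n : ℕ} {z ζ : 𝕊 × 𝕊} (hζ : (skew E τ)^[n] ζ = z) (a : ℝ) :
    a • φ.graphDir z.1 ∈ (Jacn E τ n ζ).mulVec '' E.cone R := by
  obtain ⟨P, hP, hJ⟩ := exists_jacn_mulVec_graphDir E hs hcoh n ζ
  refine ⟨(a * P⁻¹) • φ.graphDir ζ.1, E.smul_mem_cone (graphDir_mem_cone E hs hcoh hR _) _, ?_⟩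
  rw [Matrix.mulVec_smul, hJ, smul_smul, inv_mul_cancel_right₀ hP.ne', hζ]

lemma nQ_eq_pow (hs : 1 ≤ s)
    (hcoh : ∀ x, τ.toFun x = φ.toFun (E.toFun x) - φ.toFun x + c) {R : ℝ} (hR : τ.dsup ≤ R)
    (n : ℕ) : nQ E τ R n = (ℓ : ℝ) ^ n := by
  have hfib (z : 𝕊 × 𝕊) : ((skew E τ)^[n] ⁻¹' {z}).encard = (ℓ : ℕ∞) ^ n :=
    Set.encard_iterate_preimage_singleton (encard_skew_preimage_singleton E τ) n z
  have hncard (z : 𝕊 × 𝕊) : ((skew E τ)^[n] ⁻¹' {z}).ncard = ℓ ^ n := by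
    rw [ncard_def, hfib]
    rfl
  refine IsGreatest.csSup_eq ⟨?_, ?_⟩
  · set w := φ.graphDir 0
    have hw : 0 < w 0 ^ 2 + w 1 ^ 2 := by
      simp only [w, CrFun.graphDir, Matrix.cons_val_zero, Matrix.cons_val_one]
      positivity
    refine ⟨0, (√(w 0 ^ 2 + w 1 ^ 2))⁻¹ • w, isUnitVec_inv_sqrt_smul hw, ?_⟩
    rw [← Nat.cast_pow, ← hncard 0]
    congr 2
    ext ζ
    exact (and_iff_left_of_imp fun hζ =>
      smul_graphDir_mem_jacn_image_cone E hs hcoh hR hζ _).symm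
  · rintro _ ⟨z, v, -, rfl⟩
    rw [← Nat.cast_pow, ← hncard z, Nat.cast_le]
    exact ncard_le_ncard (fun ζ hζ => hζ.1) (finite_of_encard_eq_coe (by rw [hfib]; norm_cast))

end Cohomologous

theorem stmt15_general (r ℓ : ℕ) (hr : 2 ≤ r) (E : ExpMap r ℓ) (τ : CrFun r)
    (hcoh : ∃ (φ : CrFun r) (c : ℝ), ∀ x : ℝ, τ.toFun x = φ.toFun (E.toFun x) - φ.toFun x + c) :
    nlim E τ = ℓ := by
  obtain ⟨φ, c, hc⟩ := hcoh
  have hs : (1 : ℕ∞) ≤ r := by exact_mod_cast (by omega : 1 ≤ r)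
  have hq := nQ_eq_pow E hs hc (le_add_of_nonneg_right zero_le_one)
  refine Tendsto.limUnder_eq (tendsto_const_nhds.congr' ?_)
  filter_upwards [eventually_ne_atTop 0] with n hn
  rw [hq, Real.pow_rpow_inv_natCast (Nat.cast_nonneg ℓ) hn]

/-- If `τ` is cohomologous to a constant, i.e.
`τ(x) = φ(E(x)) - φ(x) + c` for some `φ ∈ C^r(𝕊¹)` and `c ∈ ℝ`, then `𝔫(τ) = ℓ`. -/
theorem stmt15 (r ℓ : ℕ) (hr : 2 ≤ r) (hl : 2 ≤ ℓ) (E : ExpMap r ℓ) (τ : CrFun r)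
    (hcoh : ∃ (φ : CrFun r) (c : ℝ), ∀ x : ℝ, τ.toFun x = φ.toFun (E.toFun x) - φ.toFun x + c) :
    nlim E τ = ℓ :=
  stmt15_general r ℓ hr E τ hcoh
end
end
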